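/- arXiv:2604.27485 — 2 statements merged into one kernel-verified Lean document; each statement's English description precedes it below -/
import Mathlib

section
/- If a family of real-valued random variables {z(T) : T > 0} satisfies the local large deviation principle with a function D, then for every α ∈ ℝ there exists a positive function ε̃_T → 0 (as T → ∞) such that for every positive function ε_T → 0 satisfying ε_T ≥ c·ε̃_T for all T for some constant c > 0, one has lim_{T→∞} (1/T) ln P(|z(T) − α| < ε_T) = −D(α) (meaning the left-hand side tends to −∞ when D(α) = +∞). -/
open MeasureTheory Filter Set
open scoped ENNReal Topology

/-- The (1/T) ln P(z(T) ∈ B) expression, valued in the extended reals so that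
`ln 0 = -∞` is handled correctly. -/
noncomputable def logProbRate {Ω : Type*} [MeasurableSpace Ω] (P : Measure Ω)
    (z : ℝ → Ω → ℝ) (B : Set ℝ) (T : ℝ) : EReal :=
  (((1 : ℝ) / T : ℝ) : EReal) * ENNReal.log (P {ω | z T ω ∈ B})

/-!
The rate `(1/T) ln P(|z(T) − α| < δ)` is monotone in `δ`, so along any `ε_T → 0` its limsup is
eventually dominated by the limsup at any fixed `δ > 0`, which tends to `−D(α)`: the upper bound
needs no choice of `ε̃`. For the lower bound, the liminf at each fixed `δ > 0` is at least `−D(α)`,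
and a diagonal argument yields `η_T → 0` along which the liminf is still at least `−D(α)`. Then
`ε̃_T = √η_T` works: `c √η_T ≥ η_T` as soon as `√η_T ≤ c`, and monotonicity does the rest.
-/

theorem exists_tendsto_atTop_eventually_diag {p : ℕ → ℝ → Prop}
    (h : ∀ n, ∀ᶠ T in atTop, p n T) :
    ∃ N : ℝ → ℕ, Tendsto N atTop atTop ∧ ∀ᶠ T in atTop, p (N T) T := by
  classical
  choose t ht using fun n => eventually_atTop.1 (h n)
  -- `A n ≥ n` makes `{n | A n ≤ T}` a subset of `[0, ⌊T⌋₊]`.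
  set A : ℕ → ℝ := fun n => max (t n) n
  refine ⟨fun T => Nat.findGreatest (fun n => A n ≤ T) ⌊T⌋₊, ?_, ?_⟩
  · refine tendsto_atTop_atTop.2 fun m => ⟨A m, fun T hT => Nat.le_findGreatest ?_ hT⟩
    exact Nat.le_floor ((le_max_right _ _).trans hT)
  · filter_upwards [eventually_ge_atTop (A 0)] with T hT
    have hAN := Nat.findGreatest_spec (P := fun n => A n ≤ T) (Nat.zero_le ⌊T⌋₊) hT
    exact ht _ _ ((le_max_left _ _).trans hAN)

theorem exists_pos_tendsto_zero_le_liminf_diag {β : Type*} [CompleteLinearOrder β]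
    [DenselyOrdered β] [TopologicalSpace β] [OrderTopology β] [FirstCountableTopology β]
    {F : ℝ → ℝ → β} {a : β} (h : ∀ δ > 0, a ≤ liminf (F δ) atTop) :
    ∃ η : ℝ → ℝ, (∀ T, 0 < η T) ∧ Tendsto η atTop (𝓝 0) ∧
      a ≤ liminf (fun T => F (η T) T) atTop := by
  rcases eq_bot_or_bot_lt a with rfl | ha
  · exact ⟨fun T => Real.exp (-T), fun T => Real.exp_pos _,
      Real.tendsto_exp_neg_atTop_nhds_zero, bot_le⟩
  obtain ⟨u, -, hu, hua⟩ := exists_seq_strictMono_tendsto' ha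
  have hev : ∀ n : ℕ, ∀ᶠ T in atTop, u n < F (1 / (n + 1)) T := fun n =>
    eventually_lt_of_lt_liminf ((hu n).2.trans_le (h _ Nat.one_div_pos_of_nat))
  obtain ⟨N, hN, hNev⟩ := exists_tendsto_atTop_eventually_diag hev
  refine ⟨fun T => 1 / (N T + 1), fun T => Nat.one_div_pos_of_nat,
    tendsto_one_div_add_atTop_nhds_zero_nat.comp hN, ?_⟩
  calc a = liminf (fun T => u (N T)) atTop := ((hua.comp hN).liminf_eq).symm
    _ ≤ liminf (fun T => F (1 / (N T + 1)) T) atTop :=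
      liminf_le_liminf (hNev.mono fun _ hT => hT.le)

theorem le_liminf_of_tendsto_liminf {β : Type*} [CompleteLinearOrder β] [TopologicalSpace β]
    [OrderTopology β] {F : ℝ → ℝ → β} (hF : ∀ᶠ T in atTop, Monotone (F · T)) {a : β}
    (h : Tendsto (fun δ => liminf (F δ) atTop) (𝓝[>] 0) (𝓝 a)) {δ : ℝ} (hδ : 0 < δ) :
    a ≤ liminf (F δ) atTop := by
  refine le_of_tendsto h ?_
  filter_upwards [Ioo_mem_nhdsGT hδ] with δ' hδ'
  exact liminf_le_liminf (hF.mono fun T hT => hT hδ'.2.le)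

theorem limsup_le_of_tendsto_limsup {β : Type*} [CompleteLinearOrder β] [TopologicalSpace β]
    [OrderTopology β] {F : ℝ → ℝ → β} (hF : ∀ᶠ T in atTop, Monotone (F · T)) {a : β}
    (h : Tendsto (fun δ => limsup (F δ) atTop) (𝓝[>] 0) (𝓝 a)) {ε : ℝ → ℝ}
    (hε : Tendsto ε atTop (𝓝 0)) :
    limsup (fun T => F (ε T) T) atTop ≤ a := by
  refine ge_of_tendsto h ?_
  filter_upwards [self_mem_nhdsWithin] with δ (hδ : 0 < δ)
  refine limsup_le_limsup ?_
  filter_upwards [hF, hε.eventually (gt_mem_nhds hδ)] with T hT hεT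
  exact hT hεT.le

theorem logProbRate_ball_monotone {Ω : Type*} [MeasurableSpace Ω] (P : Measure Ω)
    (z : ℝ → Ω → ℝ) (α : ℝ) {T : ℝ} (hT : 0 ≤ T) :
    Monotone fun δ => logProbRate P z {x | |x - α| < δ} T := by
  intro δ₁ δ₂ h
  refine mul_le_mul_of_nonneg_left ?_ (EReal.coe_nonneg.2 (by positivity))
  exact ENNReal.log_monotone (measure_mono fun ω hω => lt_of_lt_of_le hω h)

theorem stmt3_general {Ω : Type*} [MeasurableSpace Ω] (P : Measure Ω)
    (z : ℝ → Ω → ℝ)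
    (D : ℝ → ℝ≥0∞)
    (hlldp : ∀ α : ℝ,
      Tendsto (fun ε : ℝ =>
          Filter.liminf (logProbRate P z {x | |x - α| < ε}) Filter.atTop)
        (𝓝[>] 0) (𝓝 (-(D α : EReal))) ∧
      Tendsto (fun ε : ℝ =>
          Filter.limsup (logProbRate P z {x | |x - α| < ε}) Filter.atTop)
        (𝓝[>] 0) (𝓝 (-(D α : EReal)))) :
    ∀ α : ℝ, ∃ εtilde : ℝ → ℝ,
      (∀ T, 0 < εtilde T) ∧ Tendsto εtilde atTop (𝓝 0) ∧
      ∀ ε : ℝ → ℝ, (∀ T, 0 < ε T) → Tendsto ε atTop (𝓝 0) →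
        (∃ c > (0:ℝ), ∀ T, c * εtilde T ≤ ε T) →
        Tendsto (fun T : ℝ =>
            (((1 : ℝ) / T : ℝ) : EReal) * ENNReal.log (P {ω | |z T ω - α| < ε T}))
          atTop (𝓝 (-(D α : EReal))) := by
  intro α
  set F : ℝ → ℝ → EReal := fun δ T => logProbRate P z {x | |x - α| < δ} T
  have hF : ∀ᶠ T in atTop, Monotone (F · T) :=
    (eventually_ge_atTop 0).mono fun _ hT => logProbRate_ball_monotone P z α hT
  obtain ⟨η, hηpos, hη0, hηlim⟩ := exists_pos_tendsto_zero_le_liminf_diag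
    fun δ hδ => le_liminf_of_tendsto_liminf hF (hlldp α).1 hδ
  have hsqrt : Tendsto (fun T => √(η T)) atTop (𝓝 0) := by
    simpa using hη0.sqrt
  refine ⟨fun T => √(η T), fun T => Real.sqrt_pos.2 (hηpos T), hsqrt, ?_⟩
  rintro ε - hε0 ⟨c, hc, hcε⟩
  refine tendsto_of_le_liminf_of_limsup_le ?_ (limsup_le_of_tendsto_limsup hF (hlldp α).2 hε0)
  refine hηlim.trans (liminf_le_liminf ?_)
  filter_upwards [hF, hsqrt.eventually (ge_mem_nhds hc)] with T hT hcT
  refine hT ?_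
  calc η T = √(η T) * √(η T) := (Real.mul_self_sqrt (hηpos T).le).symm
    _ ≤ c * √(η T) := mul_le_mul_of_nonneg_right hcT (Real.sqrt_nonneg _)
    _ ≤ ε T := hcε T

/-- If a family of real-valued random variables `{z(T) : T > 0}` satisfies the
local large deviation principle with a function `D`, then for every `α ∈ ℝ` there is a positive
function `ε̃_T → 0` such that for every positive function `ε_T → 0` with `ε_T ≥ c·ε̃_T` for all
`T` for some constant `c > 0`, one has `lim_{T→∞} (1/T) ln P(|z(T) − α| < ε_T) = −D(α)`
(in the extended reals, so the left-hand side tends to `−∞` when `D(α) = ∞`). -/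
theorem stmt3 {Ω : Type*} [MeasurableSpace Ω] (P : Measure Ω) [IsProbabilityMeasure P]
    (z : ℝ → Ω → ℝ) (hz : ∀ T, Measurable (z T))
    (D : ℝ → ℝ≥0∞)
    (hDne : ∃ α, D α ≠ ⊤)
    (hlldp : ∀ α : ℝ,
      Tendsto (fun ε : ℝ =>
          Filter.liminf (logProbRate P z {x | |x - α| < ε}) Filter.atTop)
        (𝓝[>] 0) (𝓝 (-(D α : EReal))) ∧
      Tendsto (fun ε : ℝ =>
          Filter.limsup (logProbRate P z {x | |x - α| < ε}) Filter.atTop)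
        (𝓝[>] 0) (𝓝 (-(D α : EReal)))) :
    ∀ α : ℝ, ∃ εtilde : ℝ → ℝ,
      (∀ T, 0 < εtilde T) ∧ Tendsto εtilde atTop (𝓝 0) ∧
      ∀ ε : ℝ → ℝ, (∀ T, 0 < ε T) → Tendsto ε atTop (𝓝 0) →
        (∃ c > (0:ℝ), ∀ T, c * εtilde T ≤ ε T) →
        Tendsto (fun T : ℝ =>
            (((1 : ℝ) / T : ℝ) : EReal) * ENNReal.log (P {ω | |z T ω - α| < ε T}))
          atTop (𝓝 (-(D α : EReal))) :=
  stmt3_general P z D hlldp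
end

section
/- Let S ⊆ ℝ be a convex set with nonempty interior and A : ℝ → ℝ a function that is convex on S, differentiable on the interior of S, and steep: |A'(μ_k)| → ∞ for every sequence μ_k in the interior of S converging to a finite boundary point of S. Define D(β) := sup_{μ ∈ S} (β·μ − A(μ)) ∈ (−∞, +∞]. If β lies in the interior of the set {β ∈ ℝ : D(β) < ∞}, then there exists μ in the interior of S such that A'(μ) = β and D(β) = μ·β − A(μ). -/
/-!
At a point `μ` of the interior with `A' μ = β` the tangent line of the convex function `A` lies
below its graph, so `μ` maximises `β ν - A ν` over `S`; it remains to find such a `μ`.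
By Darboux's theorem `A'` takes every value between two of its values on the interior, so it
suffices to find interior points where `A' ≥ β` and where `A' ≤ β`. If `A' < β` on the whole
interior, then either the interior is bounded above, and steepness at its supremum forces
`A' → +∞` along an increasing sequence (as `A'` is monotone), or it is not, and then `A` grows at
most like `β μ` as `μ → ∞`, so `D(γ) = ∞` for every `γ > β`. The other inequality follows by
reflecting `S` and `A` through the origin.
-/

open Filter Set
open scoped Topology

noncomputable section

/-- The Legendre transform `D(β) = sup_{μ ∈ S} (β·μ − A(μ))` of `A` restricted to `S`,
valued in the extended reals. -/
def legendre (S : Set ℝ) (A : ℝ → ℝ) (β : ℝ) : EReal :=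
  ⨆ μ ∈ S, ((β * μ - A μ : ℝ) : EReal)

open scoped Pointwise

def IsSteep (S : Set ℝ) (A' : ℝ → ℝ) : Prop :=
  ∀ μs : ℕ → ℝ, (∀ k, μs k ∈ interior S) → ∀ μ₀ ∈ frontier S,
    Tendsto μs atTop (𝓝 μ₀) → Tendsto (fun k => |A' (μs k)|) atTop atTop

section Reflection

variable {G : Type*} [TopologicalSpace G] [InvolutiveNeg G] [ContinuousNeg G]

theorem interior_neg (s : Set G) : interior (-s) = -interior s :=
  ((Homeomorph.neg G).preimage_interior s).symm

theorem frontier_neg (s : Set G) : frontier (-s) = -frontier s :=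
  ((Homeomorph.neg G).preimage_frontier s).symm

end Reflection

theorem ConvexOn.comp_neg {𝕜 E β : Type*} [Ring 𝕜] [PartialOrder 𝕜] [AddCommGroup E]
    [Module 𝕜 E] [AddCommMonoid β] [PartialOrder β] [SMul 𝕜 β] {s : Set E} {f : E → β}
    (hf : ConvexOn 𝕜 s f) : ConvexOn 𝕜 (-s) (fun x => f (-x)) :=
  hf.comp_linearMap (-LinearMap.id)

theorem ConvexOn.add_mul_sub_le_of_hasDerivAt {S : Set ℝ} {A : ℝ → ℝ} {μ ν d : ℝ}
    (hA : ConvexOn ℝ S A) (hμ : μ ∈ S) (hν : ν ∈ S) (hd : HasDerivAt A d μ) :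
    A μ + d * (ν - μ) ≤ A ν := by
  rcases lt_trichotomy ν μ with h | rfl | h
  · have hslope := hA.slope_le_of_hasDerivAt hν hμ h hd
    rw [slope_def_field, div_le_iff₀ (sub_pos.2 h)] at hslope
    linarith
  · simp
  · have hslope := hA.le_slope_of_hasDerivAt hμ hν h hd
    rw [slope_def_field, le_div_iff₀ (sub_pos.2 h)] at hslope
    linarith

namespace IsSteep

variable {S : Set ℝ} {A' : ℝ → ℝ}

theorem comp_neg (h : IsSteep S A') : IsSteep (-S) (fun x => -A' (-x)) := by
  intro μs hμs μ₀ hμ₀ hlim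
  rw [interior_neg] at hμs
  rw [frontier_neg] at hμ₀
  simpa only [abs_neg] using h (fun k => -μs k) hμs (-μ₀) hμ₀ hlim.neg

theorem exists_le_of_bddAbove (hsteep : IsSteep S A') (hmono : MonotoneOn A' (interior S))
    (hne : (interior S).Nonempty) (hbdd : BddAbove (interior S)) (M : ℝ) :
    ∃ μ ∈ interior S, M ≤ A' μ := by
  obtain ⟨u, hu_mono, hu_lim, hu_mem⟩ := exists_seq_tendsto_sSup hne hbdd
  have hsup_notMem : sSup (interior S) ∉ interior S := fun h => by
    obtain ⟨b, hb, hbS⟩ := Eventually.exists_gt (isOpen_interior.mem_nhds h)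
    exact (le_csSup hbdd hbS).not_gt hb
  have hsup_frontier : sSup (interior S) ∈ frontier S :=
    ⟨closure_mono interior_subset (csSup_mem_closure hne hbdd), hsup_notMem⟩
  obtain ⟨k, hk⟩ := ((hsteep u hu_mem _ hsup_frontier hu_lim).eventually_gt_atTop
    (max M (-A' (u 0)))).exists
  -- `A'` is bounded below along the increasing sequence `u`, so `|A' (u k)|` can only be large
  -- because `A' (u k)` is.
  have hbelow : A' (u 0) ≤ A' (u k) := hmono (hu_mem 0) (hu_mem k) (hu_mono k.zero_le)
  refine ⟨u k, hu_mem k, ?_⟩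
  cases abs_cases (A' (u k)) <;> cases max_lt_iff.1 hk <;> linarith

end IsSteep

section Legendre

variable {S : Set ℝ} {A A' : ℝ → ℝ} {β γ : ℝ}

theorem le_legendre (γ : ℝ) {ν : ℝ} (hν : ν ∈ S) :
    ((γ * ν - A ν : ℝ) : EReal) ≤ legendre S A γ :=
  le_iSup₂ (f := fun μ (_ : μ ∈ S) => ((γ * μ - A μ : ℝ) : EReal)) ν hν

theorem bddAbove_of_legendre_ne_top (hγ : legendre S A γ ≠ ⊤) :
    BddAbove ((fun ν => γ * ν - A ν) '' S) := by
  obtain ⟨C, hC, -⟩ := EReal.lt_iff_exists_real_btwn.1 (lt_top_iff_ne_top.2 hγ)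
  refine ⟨C, forall_mem_image.2 fun ν hν => ?_⟩
  exact_mod_cast ((le_legendre γ hν).trans_lt hC).le

theorem legendre_comp_neg :
    legendre (-S) (fun x => A (-x)) (-γ) = legendre S A γ := by
  simp only [legendre, Set.mem_neg]
  exact (Equiv.neg ℝ).iSup_congr fun μ => by simp

theorem legendre_eq_of_hasDerivAt {μ : ℝ} (hA : ConvexOn ℝ S A) (hμ : μ ∈ S)
    (hd : HasDerivAt A β μ) : legendre S A β = ((μ * β - A μ : ℝ) : EReal) := by
  refine le_antisymm (iSup₂_le fun ν hν => ?_) (mul_comm μ β ▸ le_legendre β hμ)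
  have htangent := hA.add_mul_sub_le_of_hasDerivAt hμ hν hd
  exact EReal.coe_le_coe_iff.2 (by linarith)

theorem bddAbove_interior_of_deriv_le {μ₀ : ℝ} (hA : ConvexOn ℝ S A)
    (hderiv : ∀ μ ∈ interior S, HasDerivAt A (A' μ) μ) (hμ₀ : μ₀ ∈ S)
    (hle : ∀ μ ∈ interior S, A' μ ≤ β) (hβγ : β < γ) (hγ : legendre S A γ ≠ ⊤) :
    BddAbove (interior S) := by
  obtain ⟨C, hC⟩ := bddAbove_of_legendre_ne_top hγ
  refine ⟨max μ₀ ((C + A μ₀ - β * μ₀) / (γ - β)), fun μ hμ => ?_⟩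
  rcases le_or_gt μ μ₀ with h | h
  · exact le_max_of_le_left h
  refine le_max_of_le_right ((le_div_iff₀ (sub_pos.2 hβγ)).2 ?_)
  have htangent := hA.add_mul_sub_le_of_hasDerivAt (interior_subset hμ) hμ₀ (hderiv μ hμ)
  have hCμ : γ * μ - A μ ≤ C := hC (mem_image_of_mem _ (interior_subset hμ))
  nlinarith [mul_le_mul_of_nonneg_right (hle μ hμ) (sub_pos.2 h).le]

theorem exists_le_deriv (hA : ConvexOn ℝ S A)
    (hderiv : ∀ μ ∈ interior S, HasDerivAt A (A' μ) μ) (hsteep : IsSteep S A')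
    (hne : (interior S).Nonempty) (hβγ : β < γ) (hγ : legendre S A γ ≠ ⊤) :
    ∃ μ ∈ interior S, β ≤ A' μ := by
  by_contra! hlt
  have hmono : MonotoneOn A' (interior S) :=
    ((hA.subset interior_subset hA.1.interior).monotoneOn_deriv fun μ hμ =>
      (hderiv μ hμ).differentiableAt).congr fun μ hμ => (hderiv μ hμ).deriv
  obtain ⟨μ₀, hμ₀⟩ := hne
  have hbdd := bddAbove_interior_of_deriv_le hA hderiv (interior_subset hμ₀)
    (fun μ hμ => (hlt μ hμ).le) hβγ hγ
  obtain ⟨μ, hμ, hβμ⟩ := hsteep.exists_le_of_bddAbove hmono ⟨μ₀, hμ₀⟩ hbdd β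
  exact (hlt μ hμ).not_ge hβμ

theorem exists_deriv_le (hA : ConvexOn ℝ S A)
    (hderiv : ∀ μ ∈ interior S, HasDerivAt A (A' μ) μ) (hsteep : IsSteep S A')
    (hne : (interior S).Nonempty) (hγβ : γ < β) (hγ : legendre S A γ ≠ ⊤) :
    ∃ μ ∈ interior S, A' μ ≤ β := by
  have hderiv_neg : ∀ μ ∈ interior (-S), HasDerivAt (fun x => A (-x)) (-A' (-μ)) μ := by
    intro μ hμ
    rw [interior_neg] at hμ
    simpa [Function.comp_def] using (hderiv (-μ) hμ).comp μ (hasDerivAt_neg μ)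
  obtain ⟨μ, hμ, hle⟩ := exists_le_deriv hA.comp_neg hderiv_neg hsteep.comp_neg
    (by rw [interior_neg]; exact hne.neg) (neg_lt_neg hγβ) (by rwa [legendre_comp_neg])
  rw [interior_neg] at hμ
  exact ⟨-μ, hμ, by linarith⟩

end Legendre

theorem stmt10_general (S : Set ℝ) (A A' : ℝ → ℝ)
    (hSint : (interior S).Nonempty)
    (hAconv : ConvexOn ℝ S A)
    (hderiv : ∀ μ ∈ interior S, HasDerivAt A (A' μ) μ)
    (hsteep : ∀ μs : ℕ → ℝ, (∀ k, μs k ∈ interior S) → ∀ μ₀ ∈ frontier S,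
      Tendsto μs atTop (𝓝 μ₀) → Tendsto (fun k => |A' (μs k)|) atTop atTop)
    (β : ℝ)
    (hβ : β ∈ interior {b : ℝ | legendre S A b ≠ ⊤}) :
    ∃ μ ∈ interior S, A' μ = β ∧ legendre S A β = ((μ * β - A μ : ℝ) : EReal) := by
  have hfinite : ∀ᶠ γ in 𝓝 β, legendre S A γ ≠ ⊤ := mem_interior_iff_mem_nhds.1 hβ
  obtain ⟨γ₁, hγ₁β, hγ₁⟩ := hfinite.exists_lt
  obtain ⟨γ₂, hβγ₂, hγ₂⟩ := hfinite.exists_gt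
  obtain ⟨μ₁, hμ₁, hA'μ₁⟩ := exists_deriv_le hAconv hderiv hsteep hSint hγ₁β hγ₁
  obtain ⟨μ₂, hμ₂, hA'μ₂⟩ := exists_le_deriv hAconv hderiv hsteep hSint hβγ₂ hγ₂
  have hdarboux := hAconv.1.interior.ordConnected.image_hasDerivWithinAt fun μ hμ =>
    (hderiv μ hμ).hasDerivWithinAt
  obtain ⟨μ, hμ, rfl⟩ :=
    hdarboux.out (mem_image_of_mem A' hμ₁) (mem_image_of_mem A' hμ₂) ⟨hA'μ₁, hA'μ₂⟩
  exact ⟨μ, hμ, rfl, legendre_eq_of_hasDerivAt hAconv (interior_subset hμ) (hderiv μ hμ)⟩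

/-- Let `S ⊆ ℝ` be convex with nonempty interior and `A : ℝ → ℝ` convex
on `S`, differentiable on the interior of `S` (with derivative `A'`) and steep. If `β` lies in
the interior of `{β : D(β) < ∞}` where `D(β) = sup_{μ ∈ S}(βμ − A(μ))`, then there exists `μ`
in the interior of `S` with `A'(μ) = β` and `D(β) = μβ − A(μ)`. -/
theorem stmt10 (S : Set ℝ) (A A' : ℝ → ℝ)
    (hSconv : Convex ℝ S) (hSint : (interior S).Nonempty)
    (hAconv : ConvexOn ℝ S A)
    (hderiv : ∀ μ ∈ interior S, HasDerivAt A (A' μ) μ)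
    (hsteep : ∀ μs : ℕ → ℝ, (∀ k, μs k ∈ interior S) → ∀ μ₀ ∈ frontier S,
      Tendsto μs atTop (𝓝 μ₀) → Tendsto (fun k => |A' (μs k)|) atTop atTop)
    (β : ℝ)
    (hβ : β ∈ interior {b : ℝ | legendre S A b ≠ ⊤}) :
    ∃ μ ∈ interior S, A' μ = β ∧ legendre S A β = ((μ * β - A μ : ℝ) : EReal) :=
  stmt10_general S A A' hSint hAconv hderiv hsteep β hβ

end
end
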